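/- arXiv:2105.12954 — 4 statements merged into one kernel-verified Lean document; each statement's English description precedes it below -/
import Mathlib

section
/- The dilatable global entropy is nonnegative on the sequence-form polytope and its minimum over Q equals 0: φ̃(x) ≥ 0 for every x ∈ Q, and φ̃(u) = 0 at the uniform sequence-form strategy u ∈ Q defined recursively by u_∅ = 1 and u_{(j,a)} = u_{p_j}/|A_j| for every j ∈ J and a ∈ A_j. -/
/-!
Every `γ_j` enters `w` positively at the sequences `(j, a)` and negatively at the parent
sequence `p_j`, so regrouping `φ̃` by decision point gives, whenever `x_∅ = 1`,
`φ̃(x) = ∑_j γ_j (∑_a x_{ja} log x_{ja} - x_{p_j} log x_{p_j} + x_{p_j} log |A_j|)`.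
On `Q` each bracket is `x_{p_j} (log |A_j| - H(x_{j·} / x_{p_j}))`, nonnegative by Jensen's
inequality for `t log t` and zero when `x_{j·}` is uniform; `γ_j ≥ 1` by well-founded induction.
-/

open Finset

theorem WellFounded.swap_of_finite {α : Type*} [Finite α] {r : α → α → Prop}
    (h : WellFounded r) : WellFounded (Function.swap r) := by
  have : IsTrans α (Relation.TransGen (Function.swap r)) := ⟨fun _ _ _ => .trans⟩
  have : Std.Irrefl (Relation.TransGen (Function.swap r)) :=
    ⟨fun a ha => h.transGen.irrefl.irrefl a (Relation.transGen_swap.1 ha)⟩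
  exact Subrelation.wf Relation.TransGen.single (Finite.wellFounded_of_trans_of_irrefl _)

namespace Real

theorem mul_log_div (x : ℝ) {n : ℝ} (hn : n ≠ 0) :
    x * log (x / n) = x * log x - x * log n := by
  rcases eq_or_ne x 0 with rfl | hx
  · simp
  · rw [log_div hx hn, mul_sub]

theorem sum_mul_log_sum_le {ι : Type*} [Fintype ι] [Nonempty ι] {f : ι → ℝ}
    (hf : ∀ i, 0 ≤ f i) :
    (∑ i, f i) * log (∑ i, f i) ≤ ∑ i, f i * log (f i) + (∑ i, f i) * log (Fintype.card ι) := by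
  set n : ℝ := (Fintype.card ι : ℝ)
  have hn : 0 < n := by positivity
  have jensen := convexOn_mul_log.map_sum_le (t := univ) (w := fun _ => n⁻¹) (p := f)
    (fun _ _ => by positivity) (by simp [n, hn.ne']) (fun i _ => hf i)
  simp only [smul_eq_mul, ← div_eq_inv_mul, ← sum_div] at jensen
  rw [div_mul_eq_mul_div, div_le_div_iff_of_pos_right hn, mul_log_div _ hn.ne'] at jensen
  linarith

end Real

namespace SequenceForm

open Real

variable {J : Type*} {A : J → Type*} [∀ j, Fintype (A j)] (p : J → Option ((j : J) × A j))

theorem one_le_of_eq_one_add_sup' [Fintype J] [DecidableEq J] [∀ j, DecidableEq (A j)]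
    [∀ j, Nonempty (A j)]
    (hwf : WellFounded (fun j' j : J => ∃ a : A j, p j' = some ⟨j, a⟩)) {γ : J → ℝ}
    (hγ : ∀ j : J, γ j = 1 + (univ : Finset (A j)).sup' univ_nonempty
        (fun a => ∑ j' ∈ univ.filter (fun j' => p j' = some ⟨j, a⟩), γ j')) (j : J) :
    1 ≤ γ j := by
  induction j using hwf.induction with
  | _ j ih =>
    obtain ⟨a⟩ : Nonempty (A j) := inferInstance
    have hsum : 0 ≤ ∑ j' ∈ univ.filter (fun j' => p j' = some ⟨j, a⟩), γ j' :=
      sum_nonneg fun j' hj' => zero_le_one.trans (ih j' ⟨a, (mem_filter.1 hj').2⟩)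
    rw [hγ j]
    linarith [le_sup' (fun a => ∑ j' ∈ univ.filter (fun j' => p j' = some ⟨j, a⟩), γ j')
      (mem_univ a)]

theorem nonneg_of_eq_div_card [Finite J]
    (hwf : WellFounded (fun j' j : J => ∃ a : A j, p j' = some ⟨j, a⟩))
    {u : Option ((j : J) × A j) → ℝ} (hu0 : 0 ≤ u none)
    (hu : ∀ j a, u (some ⟨j, a⟩) = u (p j) / Fintype.card (A j)) (σ : Option ((j : J) × A j)) :
    0 ≤ u σ := by
  have hparent : ∀ j, 0 ≤ u (p j) := by
    intro j
    induction j using hwf.swap_of_finite.induction with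
    | _ j ih =>
      match hpj : p j with
      | none => exact hu0
      | some ⟨j₀, a⟩ => exact hu j₀ a ▸ div_nonneg (ih j₀ ⟨a, hpj⟩) (Nat.cast_nonneg _)
  match σ with
  | none => exact hu0
  | some ⟨j, a⟩ => exact hu j a ▸ div_nonneg (hparent j) (Nat.cast_nonneg _)

theorem sum_mul_comp_parent [Fintype J] [DecidableEq J] [∀ j, DecidableEq (A j)] (γ : J → ℝ) (g : Option ((j : J) × A j) → ℝ) :
    ∑ j', γ j' * g (p j') = (∑ j' ∈ univ.filter (fun j' => p j' = none), γ j') * g none +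
      ∑ j, ∑ a, (∑ j' ∈ univ.filter (fun j' => p j' = some ⟨j, a⟩), γ j') * g (some ⟨j, a⟩) := by
  rw [← sum_fiberwise univ p, Fintype.sum_option, Fintype.sum_sigma]
  simp only [sum_mul]
  congr 1
  · exact sum_congr rfl fun j' hj' => by rw [(mem_filter.1 hj').2]
  · refine sum_congr rfl fun j _ => sum_congr rfl fun a _ => sum_congr rfl fun j' hj' => ?_
    rw [(mem_filter.1 hj').2]

noncomputable def dilatedEntropyGap (x : Option ((j : J) × A j) → ℝ) (j : J) : ℝ :=
  ∑ a, x (some ⟨j, a⟩) * log (x (some ⟨j, a⟩)) - x (p j) * log (x (p j)) +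
    x (p j) * log (Fintype.card (A j))

theorem dilatedEntropyGap_nonneg [∀ j, Nonempty (A j)] {x : Option ((j : J) × A j) → ℝ}
    (hx : ∀ σ, 0 ≤ x σ) (j : J) (hj : ∑ a, x (some ⟨j, a⟩) = x (p j)) :
    0 ≤ dilatedEntropyGap p x j := by
  have := sum_mul_log_sum_le fun a => hx (some ⟨j, a⟩)
  rw [hj] at this
  unfold dilatedEntropyGap
  linarith

theorem dilatedEntropyGap_eq_zero [∀ j, Nonempty (A j)] {x : Option ((j : J) × A j) → ℝ} (j : J)
    (hj : ∀ a, x (some ⟨j, a⟩) = x (p j) / Fintype.card (A j)) :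
    dilatedEntropyGap p x j = 0 := by
  have hn : (Fintype.card (A j) : ℝ) ≠ 0 := by positivity
  simp only [dilatedEntropyGap, hj, sum_const, card_univ, nsmul_eq_mul]
  rw [← mul_assoc, mul_div_cancel₀ _ hn, mul_log_div _ hn]
  ring

theorem dilatableEntropy_eq_sum_mul_dilatedEntropyGap [Fintype J] [DecidableEq J]
    [∀ j, DecidableEq (A j)] {γ : J → ℝ} {w : Option ((j : J) × A j) → ℝ}
    (hw : ∀ (j : J) (a : A j),
      w (some ⟨j, a⟩) = γ j - ∑ j' ∈ univ.filter (fun j' => p j' = some ⟨j, a⟩), γ j')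
    {x : Option ((j : J) × A j) → ℝ} (hx : x none = 1) :
    w none * (x none * log (x none))
      + ∑ j, ∑ a, w (some ⟨j, a⟩) * (x (some ⟨j, a⟩) * log (x (some ⟨j, a⟩)))
      + ∑ j, γ j * (x (p j) * log (Fintype.card (A j)))
      = ∑ j, γ j * dilatedEntropyGap p x j := by
  have hparent := sum_mul_comp_parent p γ fun σ => x σ * log (x σ)
  simp only [hx, log_one, mul_zero, zero_add] at hparent ⊢
  simp only [dilatedEntropyGap, hw, sub_mul, mul_add, mul_sub, mul_sum, sum_add_distrib,
    sum_sub_distrib]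
  linarith

end SequenceForm

theorem dge_nonneg_and_min_zero_general
    {J : Type} [Fintype J] [DecidableEq J]
    {A : J → Type} [∀ j, Fintype (A j)] [∀ j, DecidableEq (A j)] [∀ j, Nonempty (A j)]
    (p : J → Option ((j : J) × A j))
    (hwf : WellFounded (fun j' j : J => ∃ a : A j, p j' = some ⟨j, a⟩))
    (γ : J → ℝ)
    (hγ : ∀ j : J, γ j = 1 + (Finset.univ : Finset (A j)).sup' Finset.univ_nonempty
        (fun a => ∑ j' ∈ Finset.univ.filter (fun j' => p j' = some ⟨j, a⟩), γ j'))
    (w : Option ((j : J) × A j) → ℝ)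
    (hw : ∀ (j : J) (a : A j),
      w (some ⟨j, a⟩) = γ j - ∑ j' ∈ Finset.univ.filter (fun j' => p j' = some ⟨j, a⟩), γ j')
    (Q : Set (Option ((j : J) × A j) → ℝ))
    (hQ : Q = {x | (∀ σ, 0 ≤ x σ) ∧ x none = 1 ∧
        ∀ j : J, ∑ a : A j, x (some ⟨j, a⟩) = x (p j)})
    (φ : (Option ((j : J) × A j) → ℝ) → ℝ)
    (hφ : φ = fun x => w none * (x none * Real.log (x none))
      + (∑ j : J, ∑ a : A j, w (some ⟨j, a⟩) * (x (some ⟨j, a⟩) * Real.log (x (some ⟨j, a⟩))))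
      + (∑ j : J, γ j * (x (p j) * Real.log ((Fintype.card (A j) : ℝ)))))
    (u : Option ((j : J) × A j) → ℝ)
    (hu1 : u none = 1)
    (hurec : ∀ (j : J) (a : A j), u (some ⟨j, a⟩) = u (p j) / (Fintype.card (A j) : ℝ)) :
    (∀ x ∈ Q, 0 ≤ φ x) ∧ u ∈ Q ∧ φ u = 0 := by
  subst hQ hφ
  beta_reduce
  have huQ : (∀ σ, 0 ≤ u σ) ∧ u none = 1 ∧ ∀ j, ∑ a, u (some ⟨j, a⟩) = u (p j) := by
    refine ⟨SequenceForm.nonneg_of_eq_div_card p hwf (hu1 ▸ zero_le_one) hurec, hu1, fun j => ?_⟩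
    have hn : (Fintype.card (A j) : ℝ) ≠ 0 := by positivity
    simp only [hurec, sum_const, card_univ, nsmul_eq_mul, mul_div_cancel₀ _ hn]
  refine ⟨?_, huQ, ?_⟩
  · rintro x ⟨hx, hx1, hxsum⟩
    rw [SequenceForm.dilatableEntropy_eq_sum_mul_dilatedEntropyGap p hw hx1]
    have hγ_nonneg j : 0 ≤ γ j :=
      zero_le_one.trans (SequenceForm.one_le_of_eq_one_add_sup' p hwf hγ j)
    exact sum_nonneg fun j _ =>
      mul_nonneg (hγ_nonneg j) (SequenceForm.dilatedEntropyGap_nonneg p hx j (hxsum j))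
  · rw [SequenceForm.dilatableEntropy_eq_sum_mul_dilatedEntropyGap p hw hu1]
    exact sum_eq_zero fun j _ => by
      rw [SequenceForm.dilatedEntropyGap_eq_zero p j (hurec j), mul_zero]

/-- The dilatable global entropy is nonnegative on the sequence-form polytope `Q`, and its
minimum over `Q` equals `0`, attained at the uniform sequence-form strategy `u`. -/
theorem dge_nonneg_and_min_zero
    {J : Type} [Fintype J] [DecidableEq J]
    {A : J → Type} [∀ j, Fintype (A j)] [∀ j, DecidableEq (A j)] [∀ j, Nonempty (A j)]
    (p : J → Option ((j : J) × A j))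
    (hwf : WellFounded (fun j' j : J => ∃ a : A j, p j' = some ⟨j, a⟩))
    (γ : J → ℝ) (γ0 : ℝ)
    (hγ : ∀ j : J, γ j = 1 + (Finset.univ : Finset (A j)).sup' Finset.univ_nonempty
        (fun a => ∑ j' ∈ Finset.univ.filter (fun j' => p j' = some ⟨j, a⟩), γ j'))
    (hγ0 : γ0 = 1 + ∑ j ∈ Finset.univ.filter (fun j : J => p j = none), γ j)
    (w : Option ((j : J) × A j) → ℝ)
    (hw0 : w none = γ0 - ∑ j ∈ Finset.univ.filter (fun j : J => p j = none), γ j)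
    (hw : ∀ (j : J) (a : A j),
      w (some ⟨j, a⟩) = γ j - ∑ j' ∈ Finset.univ.filter (fun j' => p j' = some ⟨j, a⟩), γ j')
    (Q : Set (Option ((j : J) × A j) → ℝ))
    (hQ : Q = {x | (∀ σ, 0 ≤ x σ) ∧ x none = 1 ∧
        ∀ j : J, ∑ a : A j, x (some ⟨j, a⟩) = x (p j)})
    (φ : (Option ((j : J) × A j) → ℝ) → ℝ)
    (hφ : φ = fun x => w none * (x none * Real.log (x none))
      + (∑ j : J, ∑ a : A j, w (some ⟨j, a⟩) * (x (some ⟨j, a⟩) * Real.log (x (some ⟨j, a⟩))))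
      + (∑ j : J, γ j * (x (p j) * Real.log ((Fintype.card (A j) : ℝ)))))
    (u : Option ((j : J) × A j) → ℝ)
    (hu1 : u none = 1)
    (hurec : ∀ (j : J) (a : A j), u (some ⟨j, a⟩) = u (p j) / (Fintype.card (A j) : ℝ)) :
    (∀ x ∈ Q, 0 ≤ φ x) ∧ u ∈ Q ∧ φ u = 0 :=
  dge_nonneg_and_min_zero_general p hwf γ hγ w hw Q hQ φ hφ u hu1 hurec
end

section
/- Theorem (ℓ₁ strong convexity of the dilatable global entropy). For every x ∈ Q with x_σ > 0 for all σ ∈ Σ, and for every vector m ∈ ℝ^Σ, the Hessian of the dilatable global entropy φ̃ at x satisfies m^⊤ ∇²φ̃(x) m = Σ_{σ∈Σ} w_σ m_σ² / x_σ ≥ (1/M_Q)·‖m‖₁², where M_Q := max_{x∈Q} ‖x‖₁. In particular, φ̃ is strongly convex with modulus 1/M_Q with respect to the ℓ₁ norm on the strictly positive part of Q. -/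
/-!
The Hessian of `φ̃` is diagonal: the terms `γ_j x_{p_j} log |A_j|` are linear in `x`, and each
`w_σ x_σ log x_σ` contributes `w_σ / x_σ`. The recursive definition of `γ` makes every weight
`w_σ ≥ 1`, so `∑ x_σ / w_σ ≤ ‖x‖₁ ≤ M_Q`, and Cauchy–Schwarz applied to
`|m_σ| = √(w_σ m_σ² / x_σ) · √(x_σ / w_σ)` gives `‖m‖₁² ≤ (∑ w_σ m_σ² / x_σ) · M_Q`.
-/

open Finset

section Hessian

variable {E F : Type*} [NormedAddCommGroup E] [NormedSpace ℝ E]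
  [NormedAddCommGroup F] [NormedSpace ℝ F]

theorem iteratedFDeriv_two_apply_eq_of_hasFDerivAt {f : E → F} {f' : E → E →L[ℝ] F}
    {f'' : E →L[ℝ] E →L[ℝ] F} {x : E} (hf : ∀ᶠ y in nhds x, HasFDerivAt f (f' y) y)
    (hf' : HasFDerivAt f' f'' x) (u v : E) :
    iteratedFDeriv ℝ 2 f x ![u, v] = f'' u v := by
  have hfderiv : fderiv ℝ f =ᶠ[nhds x] f' := hf.mono fun y hy => hy.fderiv
  rw [iteratedFDeriv_two_apply, hfderiv.fderiv_eq, hf'.fderiv]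
  rfl

end Hessian

section WeightedEntropy

open Real ContinuousLinearMap

variable {ι : Type*} [Fintype ι] (w : ι → ℝ)

theorem hasFDerivAt_sum_mul_mul_log {y : ι → ℝ} (hy : ∀ σ, y σ ≠ 0) :
    HasFDerivAt (fun z : ι → ℝ => ∑ σ, w σ * (z σ * log (z σ)))
      (∑ σ, (w σ * (log (y σ) + 1)) • (proj σ : (ι → ℝ) →L[ℝ] ℝ)) y := by
  refine HasFDerivAt.fun_sum fun σ _ => ?_
  have h := ((hasDerivAt_mul_log (hy σ)).comp_hasFDerivAt y
    (hasFDerivAt_apply (𝕜 := ℝ) σ y)).const_mul (w σ)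
  simpa only [smul_smul, Function.comp_def] using h

theorem hasFDerivAt_sum_mul_log_add_one_smul_proj {x : ι → ℝ} (hx : ∀ σ, x σ ≠ 0) :
    HasFDerivAt (fun y : ι → ℝ => ∑ σ, (w σ * (log (y σ) + 1)) • (proj σ : (ι → ℝ) →L[ℝ] ℝ))
      (∑ σ, ((w σ / x σ) • (proj σ : (ι → ℝ) →L[ℝ] ℝ)).smulRight (proj σ)) x := by
  refine HasFDerivAt.fun_sum fun σ _ => ?_
  have h := (((hasDerivAt_log (hx σ)).comp_hasFDerivAt x
    (hasFDerivAt_apply (𝕜 := ℝ) σ x)).add_const 1).const_mul (w σ)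
  simp only [smul_smul, ← div_eq_mul_inv] at h
  exact h.smul_const (proj σ : (ι → ℝ) →L[ℝ] ℝ)

theorem iteratedFDeriv_two_sum_mul_mul_log_add (L : (ι → ℝ) →L[ℝ] ℝ) {x : ι → ℝ}
    (hx : ∀ σ, x σ ≠ 0) (m : ι → ℝ) :
    iteratedFDeriv ℝ 2 (fun y : ι → ℝ => ∑ σ, w σ * (y σ * log (y σ)) + L y) x ![m, m]
      = ∑ σ, w σ * m σ ^ 2 / x σ := by
  have hnhds : ∀ᶠ y in nhds x, ∀ σ, y σ ≠ 0 :=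
    Filter.eventually_all.2 fun σ => (continuous_apply σ).continuousAt.eventually_ne (hx σ)
  rw [iteratedFDeriv_two_apply_eq_of_hasFDerivAt
    (hnhds.mono fun y hy => (hasFDerivAt_sum_mul_mul_log w hy).fun_add L.hasFDerivAt)
    ((hasFDerivAt_sum_mul_log_add_one_smul_proj w hx).add_const L)]
  simp only [_root_.sum_apply, smulRight_apply, _root_.smul_apply, proj_apply, smul_eq_mul]
  exact sum_congr rfl fun σ _ => by ring

end WeightedEntropy

theorem one_div_mul_sq_sum_abs_le_sum_mul_sq_div {ι : Type*} [Fintype ι] {w x : ι → ℝ}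
    (hw : ∀ σ, 1 ≤ w σ) (hx : ∀ σ, 0 < x σ) {M : ℝ} (hM : ∑ σ, |x σ| ≤ M) (m : ι → ℝ) :
    1 / M * (∑ σ, |m σ|) ^ 2 ≤ ∑ σ, w σ * m σ ^ 2 / x σ := by
  have hw0 σ : 0 < w σ := one_pos.trans_le (hw σ)
  have hterm σ : 0 ≤ w σ * m σ ^ 2 / x σ :=
    div_nonneg (mul_nonneg (hw0 σ).le (sq_nonneg _)) (hx σ).le
  have hS : 0 ≤ ∑ σ, w σ * m σ ^ 2 / x σ := sum_nonneg fun σ _ => hterm σ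
  have hCS : (∑ σ, |m σ|) ^ 2 ≤ (∑ σ, w σ * m σ ^ 2 / x σ) * ∑ σ, x σ / w σ := by
    refine sum_sq_le_sum_mul_sum_of_sq_le_mul _ (fun σ _ => hterm σ)
      (fun σ _ => div_nonneg (hx σ).le (hw0 σ).le) fun σ _ => le_of_eq ?_
    rw [sq_abs]
    field_simp [(hx σ).ne', (hw0 σ).ne']
  have hxw : ∑ σ, x σ / w σ ≤ M := calc
    ∑ σ, x σ / w σ ≤ ∑ σ, |x σ| :=
      sum_le_sum fun σ _ => (div_le_self (hx σ).le (hw σ)).trans (le_abs_self _)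
    _ ≤ M := hM
  rw [one_div_mul_eq_div]
  exact div_le_of_le_mul₀ ((sum_nonneg fun σ _ => abs_nonneg _).trans hM) hS
    (hCS.trans (mul_le_mul_of_nonneg_left hxw hS))

theorem dge_l1_strong_convexity_general
    {J : Type} [Fintype J] [DecidableEq J]
    {A : J → Type} [∀ j, Fintype (A j)] [∀ j, DecidableEq (A j)] [∀ j, Nonempty (A j)]
    (p : J → Option ((j : J) × A j))
    (γ : J → ℝ) (γ0 : ℝ)
    (hγ : ∀ j : J, γ j = 1 + (Finset.univ : Finset (A j)).sup' Finset.univ_nonempty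
        (fun a => ∑ j' ∈ Finset.univ.filter (fun j' => p j' = some ⟨j, a⟩), γ j'))
    (hγ0 : γ0 = 1 + ∑ j ∈ Finset.univ.filter (fun j : J => p j = none), γ j)
    (w : Option ((j : J) × A j) → ℝ)
    (hw0 : w none = γ0 - ∑ j ∈ Finset.univ.filter (fun j : J => p j = none), γ j)
    (hw : ∀ (j : J) (a : A j),
      w (some ⟨j, a⟩) = γ j - ∑ j' ∈ Finset.univ.filter (fun j' => p j' = some ⟨j, a⟩), γ j')
    (Q : Set (Option ((j : J) × A j) → ℝ))
    (M : ℝ)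
    (hM : IsGreatest ((fun x : Option ((j : J) × A j) → ℝ => ∑ σ, |x σ|) '' Q) M)
    (φ : (Option ((j : J) × A j) → ℝ) → ℝ)
    (hφ : φ = fun x => w none * (x none * Real.log (x none))
      + (∑ j : J, ∑ a : A j, w (some ⟨j, a⟩) * (x (some ⟨j, a⟩) * Real.log (x (some ⟨j, a⟩))))
      + (∑ j : J, γ j * (x (p j) * Real.log ((Fintype.card (A j) : ℝ)))))
    (x : Option ((j : J) × A j) → ℝ)
    (hxQ : x ∈ Q) (hxpos : ∀ σ, 0 < x σ)
    (m : Option ((j : J) × A j) → ℝ) :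
    iteratedFDeriv ℝ 2 φ x ![m, m] = ∑ σ, w σ * (m σ) ^ 2 / x σ ∧
    ∑ σ, w σ * (m σ) ^ 2 / x σ ≥ (1 / M) * (∑ σ, |m σ|) ^ 2 := by
  have hw1 : ∀ σ, 1 ≤ w σ := by
    rintro (_ | ⟨j, a⟩)
    · simp [hw0, hγ0]
    · have hle := le_sup' (fun a => ∑ j' ∈ univ.filter (fun j' => p j' = some ⟨j, a⟩), γ j')
        (mem_univ a)
      linarith [hw j a, hγ j]
  set L : (Option ((j : J) × A j) → ℝ) →L[ℝ] ℝ :=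
    ∑ j, (γ j * Real.log (Fintype.card (A j))) • ContinuousLinearMap.proj (p j)
  have hφL : φ = fun y => ∑ σ, w σ * (y σ * Real.log (y σ)) + L y := by
    ext y
    simp only [hφ, L, Fintype.sum_option, Fintype.sum_sigma, _root_.sum_apply,
      _root_.smul_apply, ContinuousLinearMap.proj_apply, smul_eq_mul]
    simp only [mul_comm (y _), mul_assoc, add_assoc]
  refine ⟨?_, one_div_mul_sq_sum_abs_le_sum_mul_sq_div hw1 hxpos (hM.2 ⟨x, hxQ, rfl⟩) m⟩
  rw [hφL]
  exact iteratedFDeriv_two_sum_mul_mul_log_add w L (fun σ => (hxpos σ).ne') m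

/-- **ℓ₁ strong convexity of the dilatable global entropy.** For every `x ∈ Q` with all
coordinates strictly positive and every `m`, the Hessian quadratic form of `φ̃` at `x` equals
`∑ σ, w σ * m σ ^ 2 / x σ`, which is at least `(1/M_Q) * ‖m‖₁²`, where
`M_Q = max_{x ∈ Q} ‖x‖₁`. -/
theorem dge_l1_strong_convexity
    {J : Type} [Fintype J] [DecidableEq J]
    {A : J → Type} [∀ j, Fintype (A j)] [∀ j, DecidableEq (A j)] [∀ j, Nonempty (A j)]
    (p : J → Option ((j : J) × A j))
    (hwf : WellFounded (fun j' j : J => ∃ a : A j, p j' = some ⟨j, a⟩))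
    (γ : J → ℝ) (γ0 : ℝ)
    (hγ : ∀ j : J, γ j = 1 + (Finset.univ : Finset (A j)).sup' Finset.univ_nonempty
        (fun a => ∑ j' ∈ Finset.univ.filter (fun j' => p j' = some ⟨j, a⟩), γ j'))
    (hγ0 : γ0 = 1 + ∑ j ∈ Finset.univ.filter (fun j : J => p j = none), γ j)
    (w : Option ((j : J) × A j) → ℝ)
    (hw0 : w none = γ0 - ∑ j ∈ Finset.univ.filter (fun j : J => p j = none), γ j)
    (hw : ∀ (j : J) (a : A j),
      w (some ⟨j, a⟩) = γ j - ∑ j' ∈ Finset.univ.filter (fun j' => p j' = some ⟨j, a⟩), γ j')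
    (Q : Set (Option ((j : J) × A j) → ℝ))
    (hQ : Q = {x | (∀ σ, 0 ≤ x σ) ∧ x none = 1 ∧
        ∀ j : J, ∑ a : A j, x (some ⟨j, a⟩) = x (p j)})
    (M : ℝ)
    (hM : IsGreatest ((fun x : Option ((j : J) × A j) → ℝ => ∑ σ, |x σ|) '' Q) M)
    (φ : (Option ((j : J) × A j) → ℝ) → ℝ)
    (hφ : φ = fun x => w none * (x none * Real.log (x none))
      + (∑ j : J, ∑ a : A j, w (some ⟨j, a⟩) * (x (some ⟨j, a⟩) * Real.log (x (some ⟨j, a⟩))))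
      + (∑ j : J, γ j * (x (p j) * Real.log ((Fintype.card (A j) : ℝ)))))
    (x : Option ((j : J) × A j) → ℝ)
    (hxQ : x ∈ Q) (hxpos : ∀ σ, 0 < x σ)
    (m : Option ((j : J) × A j) → ℝ) :
    iteratedFDeriv ℝ 2 φ x ![m, m] = ∑ σ, w σ * (m σ) ^ 2 / x σ ∧
    ∑ σ, w σ * (m σ) ^ 2 / x σ ≥ (1 / M) * (∑ σ, |m σ|) ^ 2 :=
  dge_l1_strong_convexity_general p γ γ0 hγ hγ0 w hw0 hw Q M hM φ hφ x hxQ hxpos m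
end

section
/- The root weight of the dilatable global entropy equals the maximum ℓ₁ norm over the sequence-form polytope: γ_∅ = max_{x∈Q} ‖x‖₁ = max_{x∈Q} Σ_{σ∈Σ} x_σ. -/
/-!
For `x ∈ Q` the flow constraints give `∑_σ x_σ = 1 + ∑_j x_{p_j}`. Write `γ_j = 1 + M_j` with
`M_j = max_a c_{j,a}` and `c_{j,a} = ∑_{j' ∈ C_{(j,a)}} γ_{j'}`. Summing `γ_j x_{p_j}` over `j` once
through this recursion and once grouped by the parent sequence `p_j` gives the identity
`∑_{j ∈ C_∅} γ_j - ∑_j x_{p_j} = ∑_{j,a} (M_j - c_{j,a}) x_{(j,a)}`.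
Its right side is nonnegative, and it vanishes for the pure strategy that always plays an action
attaining `M_j`.
-/

open Finset

namespace SequenceForm

variable {J : Type} {A : J → Type} (p : J → Option ((j : J) × A j))

inductive Reached (m : ∀ j, A j) : Option ((j : J) × A j) → Prop
  | empty : Reached m none
  | extend {j : J} : Reached m (p j) → Reached m (some ⟨j, m j⟩)

theorem reached_some_iff {m : ∀ j, A j} {j : J} {a : A j} :
    Reached p m (some ⟨j, a⟩) ↔ a = m j ∧ Reached p m (p j) := by
  constructor
  · rintro ⟨⟩
    exact ⟨rfl, by assumption⟩
  · rintro ⟨rfl, h⟩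
    exact .extend h

noncomputable def pureStrategy (m : ∀ j, A j) : Option ((j : J) × A j) → ℝ :=
  {σ | Reached p m σ}.indicator 1

variable [∀ j, Fintype (A j)]

def polytope : Set (Option ((j : J) × A j) → ℝ) :=
  {x | (∀ σ, 0 ≤ x σ) ∧ x none = 1 ∧ ∀ j : J, ∑ a : A j, x (some ⟨j, a⟩) = x (p j)}

theorem pureStrategy_mem_polytope (m : ∀ j, A j) : pureStrategy p m ∈ polytope p := by
  refine ⟨Set.indicator_nonneg fun _ _ => zero_le_one, Set.indicator_of_mem Reached.empty _,
    fun j => ?_⟩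
  classical
  simp only [pureStrategy, Set.indicator_apply, Set.mem_ofPred_eq, reached_some_iff, ite_and,
    sum_ite_eq', mem_univ, if_true, Pi.one_apply]

variable [Fintype J]

theorem sum_eq_empty_add_sum_parent {M : Type*} [AddCommMonoid M]
    (x : Option ((j : J) × A j) → M) (hx : ∀ j : J, ∑ a : A j, x (some ⟨j, a⟩) = x (p j)) :
    ∑ σ, x σ = x none + ∑ j, x (p j) := by
  rw [Fintype.sum_option, ← univ_sigma_univ, sum_sigma]
  simp only [hx]

variable [DecidableEq J] [∀ j, DecidableEq (A j)]

def childWeight {M : Type*} [AddCommMonoid M] (γ : J → M) (j : J) (a : A j) : M :=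
  ∑ j' ∈ univ.filter (fun j' => p j' = some ⟨j, a⟩), γ j'

theorem sum_mul_parent_eq {R : Type*} [CommSemiring R] (γ : J → R)
    (x : Option ((j : J) × A j) → R) :
    ∑ j, γ j * x (p j) = (∑ j ∈ univ.filter (fun j => p j = none), γ j) * x none +
      ∑ j, ∑ a : A j, childWeight p γ j a * x (some ⟨j, a⟩) := by
  rw [← sum_fiberwise univ p, Fintype.sum_option, ← univ_sigma_univ, sum_sigma]
  simp only [childWeight, sum_mul]
  congr 1
  · exact sum_congr rfl fun j hj => by rw [(mem_filter.mp hj).2]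
  · exact sum_congr rfl fun j _ => sum_congr rfl fun a _ =>
      sum_congr rfl fun i hi => by rw [(mem_filter.mp hi).2]

theorem sum_root_weight_sub_sum_parent {R : Type*} [CommRing R] (γ M : J → R)
    (hγ : ∀ j, γ j = 1 + M j) (x : Option ((j : J) × A j) → R)
    (hx : ∀ j : J, ∑ a : A j, x (some ⟨j, a⟩) = x (p j)) :
    (∑ j ∈ univ.filter (fun j => p j = none), γ j) * x none - ∑ j, x (p j) =
      ∑ j, ∑ a : A j, (M j - childWeight p γ j a) * x (some ⟨j, a⟩) := by
  have hM : ∑ j, γ j * x (p j) = ∑ j, x (p j) + ∑ j, ∑ a : A j, M j * x (some ⟨j, a⟩) := by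
    simp only [hγ, add_mul, one_mul, sum_add_distrib, ← mul_sum, hx]
  simp only [sub_mul, sum_sub_distrib]
  linear_combination hM - sum_mul_parent_eq p γ x

variable [∀ j, Nonempty (A j)] {γ : J → ℝ}
  (hγ : ∀ j, γ j = 1 + univ.sup' univ_nonempty (childWeight p γ j))
include hγ

theorem sum_parent_le_root_weight {x : Option ((j : J) × A j) → ℝ} (hx : x ∈ polytope p) :
    ∑ j, x (p j) ≤ ∑ j ∈ univ.filter (fun j => p j = none), γ j := by
  obtain ⟨hx_nonneg, hx_empty, hx_flow⟩ := hx
  have hslack := sum_root_weight_sub_sum_parent p γ _ hγ x hx_flow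
  have hslack_nonneg : 0 ≤ ∑ j, ∑ a : A j,
      (univ.sup' univ_nonempty (childWeight p γ j) - childWeight p γ j a) * x (some ⟨j, a⟩) :=
    sum_nonneg fun j _ => sum_nonneg fun a _ =>
      mul_nonneg (sub_nonneg.mpr (le_sup' _ (mem_univ a))) (hx_nonneg _)
  rw [hx_empty, mul_one] at hslack
  linarith

theorem sum_parent_pureStrategy {m : ∀ j, A j}
    (hm : ∀ j, univ.sup' univ_nonempty (childWeight p γ j) = childWeight p γ j (m j)) :
    ∑ j, pureStrategy p m (p j) = ∑ j ∈ univ.filter (fun j => p j = none), γ j := by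
  have hslack := sum_root_weight_sub_sum_parent p γ _ hγ _ (pureStrategy_mem_polytope p m).2.2
  have hslack_zero : ∀ j (a : A j),
      (univ.sup' univ_nonempty (childWeight p γ j) - childWeight p γ j a) *
        pureStrategy p m (some ⟨j, a⟩) = 0 := by
    intro j a
    by_cases ha : a = m j
    · rw [ha, hm, sub_self, zero_mul]
    · have : some ⟨j, a⟩ ∉ {σ | Reached p m σ} := fun h => ha ((reached_some_iff p).mp h).1
      rw [pureStrategy, Set.indicator_of_notMem this, mul_zero]
  rw [(pureStrategy_mem_polytope p m).2.1, mul_one] at hslack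
  simp only [hslack_zero, sum_const_zero] at hslack
  linarith

end SequenceForm

open SequenceForm in
theorem dge_root_weight_eq_max_l1_general
    {J : Type} [Fintype J] [DecidableEq J]
    {A : J → Type} [∀ j, Fintype (A j)] [∀ j, DecidableEq (A j)] [∀ j, Nonempty (A j)]
    (p : J → Option ((j : J) × A j))
    (γ : J → ℝ) (γ0 : ℝ)
    (hγ : ∀ j : J, γ j = 1 + (Finset.univ : Finset (A j)).sup' Finset.univ_nonempty
        (fun a => ∑ j' ∈ Finset.univ.filter (fun j' => p j' = some ⟨j, a⟩), γ j'))
    (hγ0 : γ0 = 1 + ∑ j ∈ Finset.univ.filter (fun j : J => p j = none), γ j)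
    (Q : Set (Option ((j : J) × A j) → ℝ))
    (hQ : Q = {x | (∀ σ, 0 ≤ x σ) ∧ x none = 1 ∧
        ∀ j : J, ∑ a : A j, x (some ⟨j, a⟩) = x (p j)}) :
    IsGreatest ((fun x : Option ((j : J) × A j) → ℝ => ∑ σ, x σ) '' Q) γ0 := by
  subst hQ hγ0
  choose m hm using fun j => exists_mem_eq_sup' univ_nonempty (childWeight p γ j)
  have hpure := pureStrategy_mem_polytope p m
  refine ⟨⟨pureStrategy p m, hpure, ?_⟩, ?_⟩
  · dsimp only
    rw [sum_eq_empty_add_sum_parent p _ hpure.2.2, hpure.2.1,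
      sum_parent_pureStrategy p hγ fun j => (hm j).2]
  · rintro _ ⟨x, hx, rfl⟩
    dsimp only
    rw [sum_eq_empty_add_sum_parent p x hx.2.2, hx.2.1]
    exact add_le_add_right (sum_parent_le_root_weight p hγ hx) 1

/-- The root weight `γ∅` of the dilatable global entropy equals the maximum ℓ₁ norm over
the sequence-form polytope `Q`: `γ∅ = max_{x ∈ Q} ∑_{σ∈Σ} x σ`. -/
theorem dge_root_weight_eq_max_l1
    {J : Type} [Fintype J] [DecidableEq J]
    {A : J → Type} [∀ j, Fintype (A j)] [∀ j, DecidableEq (A j)] [∀ j, Nonempty (A j)]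
    (p : J → Option ((j : J) × A j))
    (hwf : WellFounded (fun j' j : J => ∃ a : A j, p j' = some ⟨j, a⟩))
    (γ : J → ℝ) (γ0 : ℝ)
    (hγ : ∀ j : J, γ j = 1 + (Finset.univ : Finset (A j)).sup' Finset.univ_nonempty
        (fun a => ∑ j' ∈ Finset.univ.filter (fun j' => p j' = some ⟨j, a⟩), γ j'))
    (hγ0 : γ0 = 1 + ∑ j ∈ Finset.univ.filter (fun j : J => p j = none), γ j)
    (Q : Set (Option ((j : J) × A j) → ℝ))
    (hQ : Q = {x | (∀ σ, 0 ≤ x σ) ∧ x none = 1 ∧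
        ∀ j : J, ∑ a : A j, x (some ⟨j, a⟩) = x (p j)}) :
    IsGreatest ((fun x : Option ((j : J) × A j) → ℝ => ∑ σ, x σ) '' Q) γ0 :=
  dge_root_weight_eq_max_l1_general p γ γ0 hγ hγ0 Q hQ
end

section
/- Continuity of the dilated local term on a scaled extension. Let U ⊆ ℝ^m, let V ⊆ ℝ^n be compact, let h : ℝ^m → ℝ be an affine function that is nonnegative on U, and let d_v : ℝ^n → ℝ be continuous on V and nonnegative on V. Define d_v^□ on U ◁^h V by d_v^□(u,w) := h(u)·d_v(w/h(u)) if h(u) > 0 and d_v^□(u,w) := 0 if h(u) = 0 (this is well defined since for (u,w) ∈ U ◁^h V with h(u) > 0 one has w/h(u) ∈ V, and with h(u) = 0 one has w = 0). Then d_v^□ is continuous on U ◁^h V (with the subspace topology). -/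
/-!
Away from the zero set of `h` the dilated term is a composition of continuous maps, because
on `U ◁^h V` the point `w / h(u)` stays in `V`. At a point with `h(u) ≤ 0`, a bound `|d_v| ≤ C`
on the compact set `V` gives `|d_v^□(u, w)| ≤ C · max (h u) 0`, which tends to `0`.
-/

open Filter Topology

section DilatedTerm

variable {X E F : Type*} [AddCommGroup E] [Module ℝ E] [NormedAddCommGroup F] [NormedSpace ℝ F]

/-- The scaled extension `U ◁^g V`. -/
def scaledExtension (U : Set X) (g : X → ℝ) (V : Set E) : Set (X × E) :=
  {z | ∃ u ∈ U, ∃ v ∈ V, z = (u, g u • v)}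

/-- The dilated term `f^□`; it is set to `0` wherever `g ≤ 0`, not only where `g = 0`. -/
noncomputable def dilatedTerm (g : X → ℝ) (f : E → F) (z : X × E) : F :=
  if 0 < g z.1 then g z.1 • f ((g z.1)⁻¹ • z.2) else 0

variable {U : Set X} {g : X → ℝ} {V : Set E} {f : E → F}

theorem inv_smul_mem_of_mem_scaledExtension {z : X × E} (hz : z ∈ scaledExtension U g V)
    (hpos : 0 < g z.1) : (g z.1)⁻¹ • z.2 ∈ V := by
  obtain ⟨u, -, v, hv, rfl⟩ := hz
  rwa [inv_smul_smul₀ hpos.ne']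

theorem norm_dilatedTerm_le {C : ℝ} (hC0 : 0 ≤ C) (hC : ∀ v ∈ V, ‖f v‖ ≤ C) {z : X × E}
    (hz : z ∈ scaledExtension U g V) : ‖dilatedTerm g f z‖ ≤ C * max (g z.1) 0 := by
  unfold dilatedTerm
  split_ifs with hpos
  · calc ‖g z.1 • f ((g z.1)⁻¹ • z.2)‖ = g z.1 * ‖f ((g z.1)⁻¹ • z.2)‖ := by
          rw [norm_smul, Real.norm_of_nonneg hpos.le]
      _ ≤ g z.1 * C :=
          mul_le_mul_of_nonneg_left (hC _ (inv_smul_mem_of_mem_scaledExtension hz hpos)) hpos.le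
      _ = C * max (g z.1) 0 := by rw [max_eq_left hpos.le, mul_comm]
  · rw [norm_zero]
    exact mul_nonneg hC0 (le_max_right _ _)

variable [TopologicalSpace X] [TopologicalSpace E]

theorem continuousWithinAt_dilatedTerm_of_nonpos (hg : Continuous g) {C : ℝ}
    (hC : ∀ v ∈ V, ‖f v‖ ≤ C) {z₀ : X × E} (hz₀ : z₀ ∈ scaledExtension U g V)
    (hnonpos : g z₀.1 ≤ 0) :
    ContinuousWithinAt (dilatedTerm g f) (scaledExtension U g V) z₀ := by
  have hC0 : 0 ≤ C := by
    obtain ⟨-, -, v, hv, -⟩ := hz₀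
    exact (norm_nonneg _).trans (hC v hv)
  have hbound : Tendsto (fun z : X × E => C * max (g z.1) 0) (𝓝[scaledExtension U g V] z₀)
      (𝓝 0) := by
    have hcont : Continuous fun z : X × E => C * max (g z.1) 0 := by fun_prop
    exact (hcont.tendsto' z₀ 0 (by rw [max_eq_right hnonpos, mul_zero])).mono_left
      nhdsWithin_le_nhds
  rw [ContinuousWithinAt, dilatedTerm, if_neg hnonpos.not_gt]
  exact squeeze_zero_norm' (eventually_nhdsWithin_of_forall fun z hz =>
    norm_dilatedTerm_le hC0 hC hz) hbound

variable [ContinuousSMul ℝ E]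

theorem continuousWithinAt_dilatedTerm_of_pos (hg : Continuous g) (hf : ContinuousOn f V)
    {z₀ : X × E} (hz₀ : z₀ ∈ scaledExtension U g V) (hpos : 0 < g z₀.1) :
    ContinuousWithinAt (dilatedTerm g f) (scaledExtension U g V) z₀ := by
  set S := scaledExtension U g V
  have hg₁ : Continuous fun z : X × E => g z.1 := hg.comp continuous_fst
  have hW : {z : X × E | 0 < g z.1} ∈ 𝓝 z₀ := (isOpen_lt continuous_const hg₁).mem_nhds hpos
  rw [← continuousWithinAt_inter hW]
  have hdil : ContinuousWithinAt (fun z : X × E => (g z.1)⁻¹ • z.2) (S ∩ {z | 0 < g z.1}) z₀ :=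
    ((hg₁.continuousAt.inv₀ hpos.ne').smul continuous_snd.continuousAt).continuousWithinAt
  have hmaps : Set.MapsTo (fun z : X × E => (g z.1)⁻¹ • z.2) (S ∩ {z | 0 < g z.1}) V :=
    fun z hz => inv_smul_mem_of_mem_scaledExtension hz.1 hz.2
  have hcomp := (hf _ (inv_smul_mem_of_mem_scaledExtension hz₀ hpos)).comp
    (f := fun z : X × E => (g z.1)⁻¹ • z.2) hdil hmaps
  exact (hg₁.continuousWithinAt.smul hcomp).congr (fun z hz => if_pos hz.2) (if_pos hpos)

theorem continuousOn_dilatedTerm (hg : Continuous g) (hf : ContinuousOn f V)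
    (hbdd : ∃ C, ∀ v ∈ V, ‖f v‖ ≤ C) :
    ContinuousOn (dilatedTerm g f) (scaledExtension U g V) := by
  obtain ⟨C, hC⟩ := hbdd
  intro z₀ hz₀
  rcases lt_or_ge 0 (g z₀.1) with hpos | hnonpos
  · exact continuousWithinAt_dilatedTerm_of_pos hg hf hz₀ hpos
  · exact continuousWithinAt_dilatedTerm_of_nonpos hg hC hz₀ hnonpos

end DilatedTerm

theorem continuousOn_dilated_term_scaledExtension_general
    {m n : ℕ}
    (U : Set (Fin m → ℝ)) (V : Set (Fin n → ℝ))
    (hVc : IsCompact V)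
    (h : (Fin m → ℝ) →ᵃ[ℝ] ℝ)
    (dv : (Fin n → ℝ) → ℝ)
    (hdvc : ContinuousOn dv V) :
    ContinuousOn
      (fun z : (Fin m → ℝ) × (Fin n → ℝ) =>
        if 0 < h z.1 then h z.1 * dv ((h z.1)⁻¹ • z.2) else 0)
      {z : (Fin m → ℝ) × (Fin n → ℝ) | ∃ u ∈ U, ∃ v ∈ V, z = (u, h u • v)} :=
  continuousOn_dilatedTerm (U := U) h.continuous_of_finiteDimensional hdvc
    (hVc.exists_bound_of_continuousOn hdvc)

/-- **Continuity of the dilated local term on a scaled extension.** If `V` is compact,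
`h` is affine and nonnegative on `U`, and `d_v` is continuous and nonnegative on `V`, then
the function `d_v^□(u, w) = h(u)·d_v(w / h(u))` (set to `0` when `h(u) = 0`) is continuous
on the scaled extension `U ◁^h V` with the subspace topology. -/
theorem continuousOn_dilated_term_scaledExtension
    {m n : ℕ}
    (U : Set (Fin m → ℝ)) (V : Set (Fin n → ℝ))
    (hVc : IsCompact V)
    (h : (Fin m → ℝ) →ᵃ[ℝ] ℝ)
    (hh0 : ∀ u ∈ U, 0 ≤ h u)
    (dv : (Fin n → ℝ) → ℝ)
    (hdvc : ContinuousOn dv V)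
    (hdv0 : ∀ v ∈ V, 0 ≤ dv v) :
    ContinuousOn
      (fun z : (Fin m → ℝ) × (Fin n → ℝ) =>
        if 0 < h z.1 then h z.1 * dv ((h z.1)⁻¹ • z.2) else 0)
      {z : (Fin m → ℝ) × (Fin n → ℝ) | ∃ u ∈ U, ∃ v ∈ V, z = (u, h u • v)} :=
  continuousOn_dilated_term_scaledExtension_general U V hVc h dv hdvc
end
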